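/- arXiv:1603.01727 — 2 statements merged into one kernel-verified Lean document; each statement's English description precedes it below -/
import Mathlib

section
/- Let W be a standard one-dimensional Brownian motion, t > 0, and φ : ℝ → ℝ a bounded measurable function. Then the map x ↦ E[φ(x + W_t)] is differentiable and ∂_x E[φ(x + W_t)] = E[φ(x + W_t) · W_t / t]. -/
open MeasureTheory ProbabilityTheory Real
open scoped NNReal

/-! Shifting by `x` turns `E[φ(x + W_t)]` into `∫ φ(z) p(x, t, z) dz` with `p` the Gaussian density
of mean `x`, so `x` enters only through the density, whose `x`-derivative is
`p(x, t, z) (z - x) / t`. For `|x' - x| < 1` these derivatives are dominated by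
`(|z - x| + 1) e^{-(z - x)² / 4t}` up to a constant, so differentiation under the integral sign
applies; shifting back gives the weight `W_t / t`. -/

lemma exp_neg_sq_add_div_le {v : ℝ} (hv : 0 < v) (u s : ℝ) :
    rexp (-(u + s) ^ 2 / (2 * v)) ≤ rexp (s ^ 2 / (2 * v)) * rexp (-(1 / (4 * v)) * u ^ 2) := by
  rw [← exp_add, exp_le_exp]
  have key : s ^ 2 / (2 * v) + -(1 / (4 * v)) * u ^ 2 - -(u + s) ^ 2 / (2 * v)
      = (u + 2 * s) ^ 2 / (4 * v) := by
    field_simp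
    ring
  have : 0 ≤ (u + 2 * s) ^ 2 / (4 * v) := by positivity
  linarith

lemma integrable_abs_add_one_mul_exp_neg_mul_sq {b : ℝ} (hb : 0 < b) :
    Integrable fun u : ℝ => (|u| + 1) * rexp (-b * u ^ 2) := by
  simp_rw [add_mul, one_mul]
  refine Integrable.add ?_ (integrable_exp_neg_mul_sq hb)
  refine (integrable_mul_exp_neg_mul_sq hb).abs.congr (ae_of_all _ fun u => ?_)
  simp [abs_mul, abs_of_pos (exp_pos _)]

lemma hasDerivAt_gaussianPDFReal_mean (v : ℝ≥0) (z μ : ℝ) :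
    HasDerivAt (fun m => gaussianPDFReal m v z) (gaussianPDFReal μ v z * ((z - μ) / v)) μ := by
  have h := ((((hasDerivAt_id μ).const_sub z).pow 2).neg.div_const (2 * (v : ℝ))).exp.const_mul
    (√(2 * π * v))⁻¹
  exact h.congr_deriv (by simp only [gaussianPDFReal, id, Pi.pow_apply, Pi.neg_apply]; ring)

lemma abs_gaussianPDFReal_mul_le {v : ℝ≥0} (hv : v ≠ 0) {x μ : ℝ} (hμ : |μ - x| ≤ 1) (z : ℝ) :
    |gaussianPDFReal μ v z * ((z - μ) / v)|
      ≤ (√(2 * π * v))⁻¹ * rexp (1 / (2 * v)) / v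
        * ((|z - x| + 1) * rexp (-(1 / (4 * v)) * (z - x) ^ 2)) := by
  have hv' : (0 : ℝ) < v := NNReal.coe_pos.mpr (pos_iff_ne_zero.mpr hv)
  have hsplit : z - μ = (z - x) + (x - μ) := by ring
  have hdist : |z - μ| ≤ |z - x| + 1 := by
    rw [hsplit]
    exact (abs_add_le _ _).trans (by rw [abs_sub_comm] at hμ; linarith)
  have hexp : rexp (-(z - μ) ^ 2 / (2 * v))
      ≤ rexp (1 / (2 * v)) * rexp (-(1 / (4 * v)) * (z - x) ^ 2) := by
    rw [hsplit]
    refine (exp_neg_sq_add_div_le hv' _ _).trans (mul_le_mul_of_nonneg_right ?_ (exp_pos _).le)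
    gcongr
    rw [← sq_abs, abs_sub_comm]
    nlinarith [abs_nonneg (μ - x)]
  rw [gaussianPDFReal, abs_mul, abs_mul, abs_div, abs_of_pos hv', abs_of_nonneg (by positivity),
    abs_of_pos (exp_pos _)]
  calc (√(2 * π * v))⁻¹ * rexp (-(z - μ) ^ 2 / (2 * v)) * (|z - μ| / v)
      ≤ (√(2 * π * v))⁻¹ * (rexp (1 / (2 * v)) * rexp (-(1 / (4 * v)) * (z - x) ^ 2))
        * ((|z - x| + 1) / v) := by gcongr
    _ = _ := by ring

theorem hasDerivAt_integral_gaussianReal_mean {E : Type*} [NormedAddCommGroup E]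
    [NormedSpace ℝ E] {v : ℝ≥0} (hv : v ≠ 0) {φ : ℝ → E} (hφm : AEStronglyMeasurable φ)
    {C : ℝ} (hφb : ∀ y, ‖φ y‖ ≤ C) (x : ℝ) :
    HasDerivAt (fun μ => ∫ z, φ z ∂gaussianReal μ v)
      (∫ z, ((z - x) / v) • φ z ∂gaussianReal x v) x := by
  simp only [integral_gaussianReal_eq_integral_smul hv, smul_smul]
  have hK : (0 : ℝ) ≤ (√(2 * π * v))⁻¹ * rexp (1 / (2 * v)) / v := by positivity
  have hdom : Integrable fun z => (√(2 * π * v))⁻¹ * rexp (1 / (2 * v)) / v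
      * ((|z - x| + 1) * rexp (-(1 / (4 * v)) * (z - x) ^ 2)) * C :=
    (((integrable_abs_add_one_mul_exp_neg_mul_sq (by positivity)).comp_sub_right x).const_mul
      _).mul_const C
  refine (hasDerivAt_integral_of_dominated_loc_of_deriv_le (Metric.ball_mem_nhds x one_pos)
    (Filter.Eventually.of_forall fun μ =>
      (measurable_gaussianPDFReal μ v).aestronglyMeasurable.smul hφm)
    ((integrable_gaussianPDFReal x v).smul_bdd C hφm (ae_of_all _ hφb))
    (((measurable_gaussianPDFReal x v).mul (by fun_prop)).aestronglyMeasurable.smul hφm)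
    (ae_of_all _ fun z μ hμ => ?_) hdom
    (ae_of_all _ fun z μ _ => (hasDerivAt_gaussianPDFReal_mean v z μ).smul_const (φ z))).2
  rw [norm_smul, Real.norm_eq_abs]
  exact mul_le_mul (abs_gaussianPDFReal_mul_le hv (by simpa [Real.dist_eq] using hμ.le) z)
    (hφb z) (norm_nonneg _) (mul_nonneg hK (by positivity))

lemma integral_comp_const_add_gaussianReal {E : Type*} [NormedAddCommGroup E] [NormedSpace ℝ E]
    (f : ℝ → E) (μ : ℝ) (v : ℝ≥0) (x : ℝ) :
    ∫ y, f (x + y) ∂gaussianReal μ v = ∫ z, f z ∂gaussianReal (μ + x) v := by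
  rw [← gaussianReal_map_const_add, (measurableEmbedding_addLeft x).integral_map]

/-- First-order automatic differentiation (Malliavin weight) identity for the heat kernel:
for `W_t ~ N(0,t)` with `t > 0` and `φ` bounded measurable,
`x ↦ E[φ(x + W_t)]` is differentiable and
`∂_x E[φ(x + W_t)] = E[φ(x + W_t) · W_t / t]`. -/
theorem stmt_1 (t : ℝ) (ht : 0 < t) (φ : ℝ → ℝ) (hφm : Measurable φ)
    (C : ℝ) (hφb : ∀ y, |φ y| ≤ C) (x : ℝ) :
    HasDerivAt (fun x' => ∫ y, φ (x' + y) ∂(gaussianReal 0 t.toNNReal))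
      (∫ y, φ (x + y) * (y / t) ∂(gaussianReal 0 t.toNNReal)) x := by
  have hv : t.toNNReal ≠ 0 := by simpa using ht
  simp only [integral_comp_const_add_gaussianReal _ 0, zero_add]
  refine (hasDerivAt_integral_gaussianReal_mean hv hφm.aestronglyMeasurable hφb x).congr_deriv ?_
  have hshift := integral_comp_const_add_gaussianReal (fun z => ((z - x) / t) • φ z) 0 t.toNNReal x
  simp only [zero_add, add_sub_cancel_left] at hshift
  rw [Real.coe_toNNReal _ ht.le, ← hshift]
  exact integral_congr_ae (ae_of_all _ fun y => (smul_eq_mul _ _).trans (mul_comm _ _))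
end

section
/- If the lifetime distribution is Gamma(κ, θ), then the expected population size in the age-dependent branching process with mean offspring n₀ equals m(t) = Σ_{k=0}^∞ n₀^k γ(kκ, t/θ)/Γ(kκ) (with the k = 0 term equal to 1), and this series converges for every t ≥ 0 and n₀ ≥ 0. -/
open MeasureTheory Real intervalIntegral

/-- The `k`-fold convolution CDF `F^{*k}(t)` for i.i.d. lifetimes with density `ρ`,
with `F^{*0} ≡ 1`, defined by the convolution recursion. -/
noncomputable def Fstar (ρ : ℝ → ℝ) : ℕ → ℝ → ℝ
  | 0 => fun _ => 1
  | (k + 1) => fun t => ∫ s in (0:ℝ)..t, Fstar ρ k (t - s) * ρ s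

/-- The lower incomplete Gamma function `γ(a, x) = ∫_0^x s^{a−1} e^{−s} ds`. -/
noncomputable def lowerGamma (a x : ℝ) : ℝ :=
  ∫ s in Set.Ioc (0 : ℝ) x, s ^ (a - 1) * Real.exp (-s)

/-!
Write `g a r` for the Gamma density of shape `a` and rate `r`, so that `ρ = g κ θ⁻¹` on `(0, ∞)`.
Fubini on the triangle `{0 < s, 0 < y, s + y ≤ u}` turns the recursion defining `F^{*(k+1)}` into
the distribution function of the `(k+1)`-fold convolution power of `ρ`, and the Beta integral gives
`g a r ⋆ g b r = g (a + b) r`; hence `F^{*k}(t) = ∫₀ᵗ g (kκ) θ⁻¹ = γ(kκ, t/θ)/Γ(kκ)`. For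
convergence, tilting the rate from `r` to `M r` gives the Chernoff bound
`∫₀ˣ g a r ≤ e^{(M-1) r x} / M^a`; with `M^κ = n₀ + 1` the series is dominated by a geometric
series of ratio `n₀ / (n₀ + 1)`.
-/

open Set ProbabilityTheory

theorem integral_Ioc_integral_Ioc_sub_mul {f g : ℝ → ℝ} {u : ℝ}
    (hf : IntegrableOn f (Ioc 0 u)) (hg : IntegrableOn g (Ioc 0 u)) :
    ∫ s in Ioc 0 u, (∫ y in Ioc 0 (u - s), f y) * g s =
      ∫ x in Ioc 0 u, ∫ s in Ioo 0 x, g s * f (x - s) := by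
  set T : Set (ℝ × ℝ) := {p | 0 < p.1 ∧ 0 < p.2 ∧ p.1 + p.2 ≤ u}
  set K : ℝ × ℝ → ℝ := T.indicator fun p => g p.1 * f p.2
  have hT : MeasurableSet T := by measurability
  have hK : Integrable K (volume.prod volume) := by
    refine (integrable_indicator_iff hT).2 (IntegrableOn.mono_set (t := Ioc 0 u ×ˢ Ioc 0 u) ?_ ?_)
    · have h := hg.mul_prod hf
      rwa [Measure.prod_restrict] at h
    · rintro ⟨s, y⟩ ⟨hs, hy, hsy⟩
      exact ⟨⟨hs, by linarith⟩, ⟨hy, by linarith⟩⟩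
  have hK_apply (s y : ℝ) : K (s, y) = (Ioc 0 u).indicator g s * (Ioc 0 (u - s)).indicator f y := by
    simp only [K, T, indicator_apply, mem_ofPred_eq, mem_Ioc]
    split_ifs <;> grind
  have hK_shear (s x : ℝ) : K (s, x - s) =
      (Ioc 0 u).indicator (fun x => (Ioo 0 x).indicator (fun s => g s * f (x - s)) s) x := by
    simp only [K, T, indicator_apply, mem_ofPred_eq, mem_Ioc, mem_Ioo]
    split_ifs <;> grind
  have hswap : Integrable (Function.uncurry fun s x => K (s, x - s)) (volume.prod volume) :=
    ((measurePreserving_prod_sub volume volume).integrable_comp hK.aestronglyMeasurable).2 hK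
  calc ∫ s in Ioc 0 u, (∫ y in Ioc 0 (u - s), f y) * g s
      = ∫ s, ∫ y, K (s, y) := by
        rw [← MeasureTheory.integral_indicator measurableSet_Ioc]
        congr 1 with s
        rw [indicator_mul_right, mul_comm]
        simp only [hK_apply, MeasureTheory.integral_const_mul,
          MeasureTheory.integral_indicator measurableSet_Ioc]
    _ = ∫ s, ∫ x, K (s, x - s) := by
        congr 1 with s
        exact (integral_sub_right_eq_self (fun y => K (s, y)) s).symm
    _ = ∫ x, ∫ s, K (s, x - s) := integral_integral_swap hswap
    _ = ∫ x in Ioc 0 u, ∫ s in Ioo 0 x, g s * f (x - s) := by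
        rw [← MeasureTheory.integral_indicator measurableSet_Ioc]
        congr 1 with x
        by_cases hx : x ∈ Ioc 0 u <;>
          simp [hK_shear, hx, MeasureTheory.integral_indicator measurableSet_Ioo]

theorem Fstar_succ_eq_integral {ρ : ℝ → ℝ} {φ : ℕ → ℝ → ℝ} (hρ : EqOn ρ (φ 0) (Ioi 0))
    (hφ_int : ∀ k u, IntegrableOn (φ k) (Ioc 0 u))
    (hφ_conv : ∀ k, ∀ x > 0, ∫ s in Ioo 0 x, ρ s * φ k (x - s) = φ (k + 1) x)
    (k : ℕ) {u : ℝ} (hu : 0 ≤ u) :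
    Fstar ρ (k + 1) u = ∫ x in Ioc 0 u, φ k x := by
  induction k generalizing u with
  | zero =>
    simp only [Fstar, one_mul, intervalIntegral.integral_of_le hu]
    exact setIntegral_congr_fun measurableSet_Ioc fun s hs => hρ hs.1
  | succ k ih =>
    have hρ_int : IntegrableOn ρ (Ioc 0 u) :=
      (hφ_int 0 u).congr_fun (hρ.symm.mono Ioc_subset_Ioi_self) measurableSet_Ioc
    calc Fstar ρ (k + 2) u = ∫ s in Ioc 0 u, (∫ y in Ioc 0 (u - s), φ k y) * ρ s := by
          simp only [Fstar, intervalIntegral.integral_of_le hu]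
          refine setIntegral_congr_fun measurableSet_Ioc fun s hs => ?_
          rw [← ih (sub_nonneg.2 hs.2)]
          rfl
      _ = ∫ x in Ioc 0 u, ∫ s in Ioo 0 x, ρ s * φ k (x - s) :=
          integral_Ioc_integral_Ioc_sub_mul (hφ_int k u) hρ_int
      _ = ∫ x in Ioc 0 u, φ (k + 1) x :=
          setIntegral_congr_fun measurableSet_Ioc fun x hx => hφ_conv k x hx.1

theorem integral_Ioo_rpow_mul_rpow_sub {a b x : ℝ} (ha : 0 < a) (hb : 0 < b) (hx : 0 < x) :
    ∫ s in Ioo 0 x, s ^ (a - 1) * (x - s) ^ (b - 1) = x ^ (a + b - 1) * beta a b := by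
  apply Complex.ofReal_injective
  calc ((∫ s in Ioo 0 x, s ^ (a - 1) * (x - s) ^ (b - 1) : ℝ) : ℂ)
      = ∫ s in (0 : ℝ)..x, (s : ℂ) ^ ((a : ℂ) - 1) * ((x : ℂ) - s) ^ ((b : ℂ) - 1) := by
        rw [intervalIntegral.integral_of_le hx.le, integral_Ioc_eq_integral_Ioo,
          ← integral_complex_ofReal]
        refine setIntegral_congr_fun measurableSet_Ioo fun s hs => ?_
        push_cast
        rw [Complex.ofReal_cpow hs.1.le, Complex.ofReal_cpow (sub_nonneg.2 hs.2.le)]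
        push_cast
        rfl
    _ = (x : ℂ) ^ ((a : ℂ) + b - 1) * Complex.betaIntegral a b := Complex.betaIntegral_scaled _ _ hx
    _ = ((x ^ (a + b - 1) * beta a b : ℝ) : ℂ) := by
        rw [Complex.betaIntegral_eq_Gamma_mul_div _ _ (by simpa) (by simpa), beta,
          ← Complex.ofReal_add, Complex.Gamma_ofReal, Complex.Gamma_ofReal, Complex.Gamma_ofReal]
        push_cast [Complex.ofReal_cpow hx.le]
        rfl

theorem integrable_gammaPDFReal {a r : ℝ} (ha : 0 < a) (hr : 0 < r) :
    Integrable (gammaPDFReal a r) := by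
  refine ⟨(measurable_gammaPDFReal a r).aestronglyMeasurable, ?_⟩
  rw [hasFiniteIntegral_iff_ofReal (ae_of_all _ (gammaPDFReal_nonneg ha hr))]
  exact (lintegral_gammaPDF_eq_one ha hr).trans_lt ENNReal.one_lt_top

theorem integral_gammaPDFReal {a r : ℝ} (ha : 0 < a) (hr : 0 < r) :
    ∫ x, gammaPDFReal a r x = 1 := by
  rw [integral_eq_lintegral_of_nonneg_ae (ae_of_all _ (gammaPDFReal_nonneg ha hr))
    (measurable_gammaPDFReal a r).aestronglyMeasurable]
  change (∫⁻ x, gammaPDF a r x).toReal = 1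
  rw [lintegral_gammaPDF_eq_one ha hr, ENNReal.toReal_one]

theorem integral_Ioo_gammaPDFReal_mul_gammaPDFReal_sub {a b r x : ℝ} (ha : 0 < a) (hb : 0 < b)
    (hr : 0 ≤ r) (hx : 0 < x) :
    ∫ s in Ioo 0 x, gammaPDFReal b r s * gammaPDFReal a r (x - s) = gammaPDFReal (a + b) r x := by
  have hexp (s : ℝ) : exp (-(r * s)) * exp (-(r * (x - s))) = exp (-(r * x)) := by
    rw [← exp_add]; ring_nf
  calc ∫ s in Ioo 0 x, gammaPDFReal b r s * gammaPDFReal a r (x - s)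
      = ∫ s in Ioo 0 x, r ^ b / Gamma b * (r ^ a / Gamma a) * exp (-(r * x)) *
          (s ^ (b - 1) * (x - s) ^ (a - 1)) := by
        refine setIntegral_congr_fun measurableSet_Ioo fun s hs => ?_
        rw [gammaPDFReal, gammaPDFReal, if_pos hs.1.le, if_pos (sub_nonneg.2 hs.2.le), ← hexp s]
        ring
    _ = gammaPDFReal (a + b) r x := by
        rw [MeasureTheory.integral_const_mul, integral_Ioo_rpow_mul_rpow_sub hb ha hx, beta,
          gammaPDFReal, if_pos hx.le, add_comm b a, rpow_add' hr (by positivity : a + b ≠ 0)]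
        field_simp [(Gamma_pos_of_pos ha).ne', (Gamma_pos_of_pos hb).ne']

theorem integral_Ioc_gammaPDFReal {a r u : ℝ} (hr : 0 < r) (hu : 0 ≤ u) :
    ∫ y in Ioc 0 u, gammaPDFReal a r y = lowerGamma a (r * u) / Gamma a := by
  have hsubst :
      lowerGamma a (r * u) = r * ∫ y in (0 : ℝ)..u, (r * y) ^ (a - 1) * exp (-(r * y)) := by
    rw [lowerGamma, ← intervalIntegral.integral_of_le (by positivity),
      intervalIntegral.integral_comp_mul_left (fun y => y ^ (a - 1) * exp (-y)) hr.ne', mul_zero,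
      smul_eq_mul, mul_inv_cancel_left₀ hr.ne']
  rw [hsubst, ← intervalIntegral.integral_const_mul, ← intervalIntegral.integral_div,
    intervalIntegral.integral_of_le hu]
  refine setIntegral_congr_fun measurableSet_Ioc fun y hy => ?_
  rw [gammaPDFReal, if_pos hy.1.le, mul_rpow hr.le hy.1.le, rpow_sub_one hr.ne']
  field_simp

theorem integral_Ioc_gammaPDFReal_le {a r M : ℝ} (ha : 0 < a) (hr : 0 < r) (hM : 1 ≤ M) (x : ℝ) :
    ∫ y in Ioc 0 x, gammaPDFReal a r y ≤ exp ((M - 1) * r * x) / M ^ a := by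
  have hM₀ : 0 < M := by linarith
  have hΓ : 0 < Gamma a := Gamma_pos_of_pos ha
  have htilt : ∀ y ∈ Ioc 0 x,
      gammaPDFReal a r y ≤ exp ((M - 1) * r * x) / M ^ a * gammaPDFReal a (M * r) y := by
    intro y hy
    have hy₀ : 0 < y := hy.1
    -- `gammaPDFReal a r y = e^{(M-1) r y} / M^a * gammaPDFReal a (M r) y`, and `y ≤ x`
    have hexp : exp (-(r * y)) ≤ exp ((M - 1) * r * x) * exp (-(M * r * y)) := by
      rw [← exp_add, exp_le_exp]
      nlinarith [hy.2, mul_nonneg (sub_nonneg.2 hM) hr.le]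
    rw [gammaPDFReal, gammaPDFReal, if_pos hy₀.le, if_pos hy₀.le, mul_rpow hM₀.le hr.le]
    calc r ^ a / Gamma a * y ^ (a - 1) * exp (-(r * y))
        ≤ r ^ a / Gamma a * y ^ (a - 1) * (exp ((M - 1) * r * x) * exp (-(M * r * y))) := by
          gcongr
      _ = _ := by field_simp
  calc ∫ y in Ioc 0 x, gammaPDFReal a r y
      ≤ ∫ y in Ioc 0 x, exp ((M - 1) * r * x) / M ^ a * gammaPDFReal a (M * r) y :=
        setIntegral_mono_on (integrable_gammaPDFReal ha hr).integrableOn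
          ((integrable_gammaPDFReal ha (by positivity)).integrableOn.const_mul _)
          measurableSet_Ioc htilt
    _ = exp ((M - 1) * r * x) / M ^ a * ∫ y in Ioc 0 x, gammaPDFReal a (M * r) y :=
        MeasureTheory.integral_const_mul _ _
    _ ≤ exp ((M - 1) * r * x) / M ^ a * ∫ y, gammaPDFReal a (M * r) y :=
        mul_le_mul_of_nonneg_left
          (setIntegral_le_integral (integrable_gammaPDFReal ha (by positivity))
            (ae_of_all _ (gammaPDFReal_nonneg ha (by positivity)))) (by positivity)
    _ = exp ((M - 1) * r * x) / M ^ a := by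
        rw [integral_gammaPDFReal ha (by positivity), mul_one]

theorem Fstar_succ_eq_integral_gammaPDFReal {ρ : ℝ → ℝ} {κ r : ℝ} (hκ : 0 < κ) (hr : 0 < r)
    (hρ : EqOn ρ (gammaPDFReal κ r) (Ioi 0)) (k : ℕ) {u : ℝ} (hu : 0 ≤ u) :
    Fstar ρ (k + 1) u = ∫ y in Ioc 0 u, gammaPDFReal ((k + 1 : ℕ) * κ) r y := by
  refine Fstar_succ_eq_integral (φ := fun k => gammaPDFReal ((k + 1 : ℕ) * κ) r)
    (by simpa using hρ) (fun k u => (integrable_gammaPDFReal (by positivity) hr).integrableOn)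
    (fun k x hx => ?_) k hu
  rw [setIntegral_congr_fun measurableSet_Ioo fun s hs => by rw [hρ hs.1],
    integral_Ioo_gammaPDFReal_mul_gammaPDFReal_sub (by positivity) hκ hr.le hx]
  push_cast
  ring_nf

theorem summable_pow_mul_integral_Ioc_gammaPDFReal {κ r n₀ : ℝ} (hκ : 0 < κ) (hr : 0 < r)
    (hn₀ : 0 ≤ n₀) (x : ℝ) :
    Summable fun k : ℕ => n₀ ^ (k + 1) * ∫ y in Ioc 0 x, gammaPDFReal ((k + 1 : ℕ) * κ) r y := by
  set M := (n₀ + 1) ^ κ⁻¹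
  have hM : 1 ≤ M := one_le_rpow (by linarith) (inv_nonneg.2 hκ.le)
  have hMκ : M ^ κ = n₀ + 1 := rpow_inv_rpow (by linarith) hκ.ne'
  set q := n₀ / (n₀ + 1)
  have hq : q < 1 := (div_lt_one (by linarith)).2 (by linarith)
  set C := exp ((M - 1) * r * x)
  refine Summable.of_nonneg_of_le (fun k => ?_) (fun k => ?_)
    ((summable_geometric_of_lt_one (by positivity) hq).mul_left (C * q))
  · exact mul_nonneg (pow_nonneg hn₀ _) (setIntegral_nonneg measurableSet_Ioc fun y _ =>
      gammaPDFReal_nonneg (by positivity) hr y)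
  · calc n₀ ^ (k + 1) * ∫ y in Ioc 0 x, gammaPDFReal ((k + 1 : ℕ) * κ) r y
        ≤ n₀ ^ (k + 1) * (C / M ^ ((k + 1 : ℕ) * κ)) :=
          mul_le_mul_of_nonneg_left (integral_Ioc_gammaPDFReal_le (by positivity) hr hM x)
            (by positivity)
      _ = C * q * q ^ k := by
          rw [mul_comm _ κ, rpow_mul (by positivity), hMκ, rpow_natCast, mul_assoc, ← pow_succ',
            div_pow]
          ring

/-- For `Gamma(κ,θ)` lifetimes, the expected population size is
`m(t) = Σ_{k≥0} n₀^k γ(kκ, t/θ)/Γ(kκ)` (the `k = 0` term being `1`), and this series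
converges for every `t ≥ 0` and `n₀ ≥ 0`. -/
theorem stmt_10 (κ θ : ℝ) (hκ : 0 < κ) (hθ : 0 < θ)
    (ρ : ℝ → ℝ)
    (hρ : ∀ t : ℝ, ρ t =
      if 0 < t then t ^ (κ - 1) * Real.exp (-t / θ) / (Real.Gamma κ * θ ^ κ) else 0)
    (n₀ : ℝ) (hn₀ : 0 ≤ n₀) (t : ℝ) (ht : 0 ≤ t) :
    (Summable fun k : ℕ =>
      if k = 0 then (1 : ℝ) else n₀ ^ k * lowerGamma (k * κ) (t / θ) / Real.Gamma (k * κ)) ∧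
    (∀ k : ℕ, n₀ ^ k * Fstar ρ k t =
      if k = 0 then (1 : ℝ) else n₀ ^ k * lowerGamma (k * κ) (t / θ) / Real.Gamma (k * κ)) ∧
    (∑' k, n₀ ^ k * Fstar ρ k t) = ∑' k : ℕ,
      if k = 0 then (1 : ℝ) else n₀ ^ k * lowerGamma (k * κ) (t / θ) / Real.Gamma (k * κ) := by
  have hr : 0 < θ⁻¹ := inv_pos.2 hθ
  have hρ_gamma : EqOn ρ (gammaPDFReal κ θ⁻¹) (Ioi 0) := fun s (hs : 0 < s) => by
    rw [hρ, if_pos hs, gammaPDFReal, if_pos hs.le, inv_rpow hθ.le, inv_mul_eq_div, neg_div]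
    ring
  have hFstar (k : ℕ) := Fstar_succ_eq_integral_gammaPDFReal hκ hr hρ_gamma k ht
  have hterm (k : ℕ) : n₀ ^ k * Fstar ρ k t =
      if k = 0 then (1 : ℝ) else n₀ ^ k * lowerGamma (k * κ) (t / θ) / Real.Gamma (k * κ) := by
    cases k with
    | zero => simp [Fstar]
    | succ k =>
      rw [if_neg k.succ_ne_zero, hFstar, integral_Ioc_gammaPDFReal hr ht, inv_mul_eq_div,
        mul_div_assoc]
  have hsum : Summable fun k => n₀ ^ k * Fstar ρ k t := by
    refine (summable_nat_add_iff 1).1 ?_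
    simpa only [hFstar] using summable_pow_mul_integral_Ioc_gammaPDFReal hκ hr hn₀ t
  exact ⟨funext hterm ▸ hsum, hterm, tsum_congr hterm⟩
end
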